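/- The number of ascent sequences of length n avoiding the pattern 021 equals the n-th Catalan number C_n. -/

import Mathlib

open Filter Topology

/-- Number of ascents in a sequence (list) of naturals. -/
def asc (s : List ℕ) : ℕ :=
  ((s.zip s.tail).filter (fun p => p.1 < p.2)).length

/-- `s` is an ascent sequence: first entry `0`, and each later entry is at most
one more than the number of ascents of the preceding prefix. -/
def IsAscentSeq (s : List ℕ) : Prop :=
  (0 < s.length → s.getD 0 0 = 0) ∧
  ∀ i, 0 < i → i < s.length → s.getD i 0 ≤ asc (s.take i) + 1

/-- `s` is a weak ascent sequence: every entry is at most the number of ascents. -/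
def IsWeakAscentSeq (s : List ℕ) : Prop :=
  ∀ x ∈ s, x ≤ asc s

/-- `s` contains the pattern `p`: some subsequence of `s` is order-isomorphic
(including equalities) to `p`. -/
def ContainsPattern (s p : List ℕ) : Prop :=
  ∃ idx : Fin p.length → ℕ, StrictMono idx ∧ (∀ a, idx a < s.length) ∧
    ∀ a b : Fin p.length, p.get a < p.get b ↔ s.getD (idx a) 0 < s.getD (idx b) 0

def AvoidsPattern (s p : List ℕ) : Prop := ¬ ContainsPattern s p

/-- A pattern of length `j` is a permutation of `0,…,j-1`. -/
def IsPattern (p : List ℕ) : Prop := List.Perm p (List.range p.length)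

/-- Sum-indecomposable: no proper prefix whose entries are all smaller than
all entries of the complementary suffix. -/
def SumIndecomposable (p : List ℕ) : Prop :=
  ¬ ∃ i, 0 < i ∧ i < p.length ∧ ∀ x ∈ p.take i, ∀ y ∈ p.drop i, x < y

/-- Number of `p`-avoiding ascent sequences of length `k`. -/
noncomputable def ascentAvoidCount (p : List ℕ) (k : ℕ) : ℕ :=
  {s : List ℕ | s.length = k ∧ IsAscentSeq s ∧ AvoidsPattern s p}.ncard

/-- Number of `p`-avoiding weak ascent sequences of length `k`. -/
noncomputable def weakAvoidCount (p : List ℕ) (k : ℕ) : ℕ :=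
  {s : List ℕ | s.length = k ∧ IsWeakAscentSeq s ∧ AvoidsPattern s p}.ncard

def listMax (s : List ℕ) : ℕ := s.foldr max 0
def listMin (s : List ℕ) : ℕ := s.foldr min (listMax s)

/-- Reverse-complement map: `m j = max + min - n (k+1-j)`. -/
def revComp (s : List ℕ) : List ℕ :=
  s.reverse.map (fun x => listMax s + listMin s - x)

/-- Occurrence of pattern 000: three equal entries. -/
def Contains000 (s : List ℕ) : Prop :=
  ∃ a b c, a < b ∧ b < c ∧ c < s.length ∧
    s.getD a 0 = s.getD b 0 ∧ s.getD b 0 = s.getD c 0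

/-- Occurrence of pattern 100: `n i₁ > n i₂ = n i₃`. -/
def Contains100 (s : List ℕ) : Prop :=
  ∃ a b c, a < b ∧ b < c ∧ c < s.length ∧
    s.getD b 0 < s.getD a 0 ∧ s.getD b 0 = s.getD c 0

/-- Occurrence of pattern 110: `n i₁ = n i₂ > n i₃`. -/
def Contains110 (s : List ℕ) : Prop :=
  ∃ a b c, a < b ∧ b < c ∧ c < s.length ∧
    s.getD a 0 = s.getD b 0 ∧ s.getD c 0 < s.getD b 0

/-- Occurrence of pattern 120: `n i₂ > n i₁ > n i₃`. -/
def Contains120 (s : List ℕ) : Prop :=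
  ∃ a b c, a < b ∧ b < c ∧ c < s.length ∧
    s.getD a 0 < s.getD b 0 ∧ s.getD c 0 < s.getD a 0

/-- Occurrence of pattern 201: `n i₁ > n i₃ > n i₂`. -/
def Contains201 (s : List ℕ) : Prop :=
  ∃ a b c, a < b ∧ b < c ∧ c < s.length ∧
    s.getD c 0 < s.getD a 0 ∧ s.getD b 0 < s.getD c 0

/-- Occurrence of pattern 012: `n i₁ < n i₂ < n i₃`. -/
def Contains012 (s : List ℕ) : Prop :=
  ∃ a b c, a < b ∧ b < c ∧ c < s.length ∧
    s.getD a 0 < s.getD b 0 ∧ s.getD b 0 < s.getD c 0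

/-- Occurrence of pattern 011: `n i₁ < n i₂ = n i₃`. -/
def Contains011 (s : List ℕ) : Prop :=
  ∃ a b c, a < b ∧ b < c ∧ c < s.length ∧
    s.getD a 0 < s.getD b 0 ∧ s.getD b 0 = s.getD c 0

/-- Occurrence of pattern 021: `n i₁ < n i₃ < n i₂`. -/
def Contains021 (s : List ℕ) : Prop :=
  ∃ a b c, a < b ∧ b < c ∧ c < s.length ∧
    s.getD a 0 < s.getD c 0 ∧ s.getD c 0 < s.getD b 0

/-- Occurrence of pattern 102: `n i₂ < n i₁ < n i₃`. -/
def Contains102 (s : List ℕ) : Prop :=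
  ∃ a b c, a < b ∧ b < c ∧ c < s.length ∧
    s.getD b 0 < s.getD a 0 ∧ s.getD a 0 < s.getD c 0

/-- The construction `C = 0101⋯01 W̃₁⋯W̃ₖ` from weak ascent sequences. -/
def buildC (k : ℕ) (W : Fin k → List ℕ) : List ℕ :=
  (List.replicate k ([0,1] : List ℕ)).flatten ++
    (List.ofFn (fun h : Fin k =>
      (W h).map (fun x =>
        x + 1 + ∑ j ∈ Finset.univ.filter (fun j => j < h), listMax (W j)))).flatten

/-!
An ascent sequence avoids `021` exactly when its nonzero entries weakly increase. A nonempty such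
sequence `s` with maximum `m` is continued by appending `0` or any `v` with
`max 1 m ≤ v ≤ asc s + 1`, and the number of its continuations by `k` entries depends only on
whether `s` ends in `0` and on the slack `u = asc s + 1 - max 1 m`, resp. `w = asc s - m`. With `c`
the Catalan series (`c = 1 + X c²`) and `r = 1 + X c³`, these numbers are the coefficients of
`c² rᵘ`, resp. `c³ rʷ`: both series satisfy the recursion of the generating tree, which comes down
to `c² = 1 + X c² + X c³` and the geometric sum `1 + X c³ ∑_{i ≤ u} rⁱ = rᵘ⁺¹`. At the root, the
empty sequence with the single child `[0]`, the recursion is `c = 1 + X c²` itself.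
-/

open PowerSeries Finset

section Extensions

variable {α : Type*}

def extensions (P : List α → Prop) (s : List α) (m : ℕ) : Set (List α) :=
  {w | w.length = m ∧ P (s ++ w)}

variable {P : List α → Prop}

lemma extensions_zero {s : List α} (hs : P s) : extensions P s 0 = {[]} := by
  ext w
  simp +contextual [extensions, List.length_eq_zero_iff, hs]

lemma extensions_succ (hP : ∀ s t, P (s ++ t) → P s) {s : List α} {K : Finset α}
    (hK : ∀ v, P (s ++ [v]) ↔ v ∈ K) (m : ℕ) :
    extensions P s (m + 1) = ⋃ v ∈ K, List.cons v '' extensions P (s ++ [v]) m := by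
  ext w
  rcases w with _ | ⟨v, w⟩
  · simp [extensions]
  · have hassoc : s ++ v :: w = s ++ [v] ++ w := by simp
    simp only [extensions, Set.mem_ofPred_eq, List.length_cons, Set.mem_iUnion, Set.mem_image,
      List.cons.injEq, hassoc]
    constructor
    · rintro ⟨hw, hPw⟩
      exact ⟨v, (hK v).1 (hP _ _ hPw), w, ⟨by omega, hPw⟩, rfl, rfl⟩
    · rintro ⟨v, -, w, ⟨hw, hPw⟩, rfl, rfl⟩
      exact ⟨by omega, hPw⟩

lemma encard_extensions_succ (hP : ∀ s t, P (s ++ t) → P s) {s : List α} {K : Finset α}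
    (hK : ∀ v, P (s ++ [v]) ↔ v ∈ K) (m : ℕ) :
    (extensions P s (m + 1)).encard = ∑ v ∈ K, (extensions P (s ++ [v]) m).encard := by
  rw [extensions_succ hP hK, ← set_biUnion_coe, K.finite_toSet.encard_biUnion,
    finsum_mem_coe_finset]
  · simp only [List.cons_injective.encard_image]
  · intro v _ v' _ hvv'
    simp only [Function.onFun, Set.disjoint_left, Set.mem_image]
    rintro _ ⟨w, -, rfl⟩ ⟨w', -, h⟩
    exact hvv' (List.cons.inj h).1.symm

theorem encard_extensions_eq_coeff (hP : ∀ s t, P (s ++ t) → P s) (K : List α → Finset α)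
    (hK : ∀ s, P s → ∀ v, P (s ++ [v]) ↔ v ∈ K s) (f : List α → ℕ⟦X⟧)
    (hf : ∀ s, P s → f s = 1 + X * ∑ v ∈ K s, f (s ++ [v])) (m : ℕ) :
    ∀ s, P s → (extensions P s m).encard = coeff m (f s) := by
  induction m with
  | zero =>
    intro s hs
    simp [extensions_zero hs, hf s hs]
  | succ m ih =>
    intro s hs
    rw [encard_extensions_succ hP (hK s hs), hf s hs, map_add, coeff_succ_X_mul, map_sum]
    simp only [coeff_one, Nat.succ_ne_zero, if_false, zero_add, Nat.cast_sum]
    exact sum_congr rfl fun v hv => ih _ ((hK s hs v).2 hv)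

end Extensions

section CatalanEquation

variable {R : Type*} [CommSemiring R] {x c : R}

lemma sq_mul_pow_eq_add_pow_succ (hc : c = 1 + x * c ^ 2) (u : ℕ) :
    c ^ 2 * (x * c ^ 3 + 1) ^ u = x * c ^ 2 * (x * c ^ 3 + 1) ^ u + (x * c ^ 3 + 1) ^ (u + 1) := by
  have hsq : c ^ 2 = 1 + x * c ^ 2 + x * c ^ 3 :=
    calc c ^ 2 = (1 + x * c ^ 2) * c := by rw [← hc, sq]
      _ = c + x * c ^ 3 := by ring
      _ = 1 + x * c ^ 2 + x * c ^ 3 := by rw [← hc]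
  calc c ^ 2 * (x * c ^ 3 + 1) ^ u = (1 + x * c ^ 2 + x * c ^ 3) * (x * c ^ 3 + 1) ^ u := by
        rw [← hsq]
    _ = _ := by ring

lemma pow_succ_eq_one_add_geom (u : ℕ) :
    (x * c ^ 3 + 1) ^ (u + 1) = 1 + x * ∑ i ∈ range (u + 1), c ^ 3 * (x * c ^ 3 + 1) ^ i := by
  rw [← geom_sum_mul_add, ← mul_sum]
  ring

lemma sq_mul_pow_eq_one_add (hc : c = 1 + x * c ^ 2) (u : ℕ) :
    c ^ 2 * (x * c ^ 3 + 1) ^ u =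
      1 + x * (c ^ 2 * (x * c ^ 3 + 1) ^ u + ∑ i ∈ range (u + 1), c ^ 3 * (x * c ^ 3 + 1) ^ i) := by
  conv_lhs => rw [sq_mul_pow_eq_add_pow_succ hc, pow_succ_eq_one_add_geom]
  ring

lemma cube_mul_pow_eq_one_add (hc : c = 1 + x * c ^ 2) (w : ℕ) :
    c ^ 3 * (x * c ^ 3 + 1) ^ w =
      1 + x * (c ^ 2 * (x * c ^ 3 + 1) ^ (w + 1) + c ^ 3 * (x * c ^ 3 + 1) ^ w +
        ∑ i ∈ range (w + 1), c ^ 3 * (x * c ^ 3 + 1) ^ i) := by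
  calc c ^ 3 * (x * c ^ 3 + 1) ^ w = c * (c ^ 2 * (x * c ^ 3 + 1) ^ w) := by ring
    _ = x * c ^ 3 * (x * c ^ 3 + 1) ^ w + c * (x * c ^ 3 + 1) ^ (w + 1) := by
        rw [sq_mul_pow_eq_add_pow_succ hc]; ring
    _ = x * c ^ 3 * (x * c ^ 3 + 1) ^ w + (1 + x * c ^ 2) * (x * c ^ 3 + 1) ^ (w + 1) := by
        rw [← hc]
    _ = _ := by
        rw [add_mul (1 : R), one_mul, pow_succ_eq_one_add_geom w]
        ring

end CatalanEquation

section AscentSequences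

lemma asc_cons_cons (a b : ℕ) (t : List ℕ) :
    asc (a :: b :: t) = asc (b :: t) + if a < b then 1 else 0 := by
  by_cases h : a < b <;> simp [asc, h]

lemma asc_singleton (a : ℕ) : asc [a] = 0 := rfl

lemma asc_append_singleton : ∀ (s : List ℕ) (b v : ℕ),
    asc (s ++ [b] ++ [v]) = asc (s ++ [b]) + if b < v then 1 else 0
  | [], b, v => asc_cons_cons b v []
  | [a], b, v => by
    change asc [a, b, v] = asc [a, b] + _
    rw [asc_cons_cons, asc_cons_cons a b, asc_cons_cons b v, asc_singleton, asc_singleton]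
    omega
  | a :: a' :: s, b, v => by
    have ih := asc_append_singleton (a' :: s) b v
    simp only [List.cons_append, List.append_assoc] at ih ⊢
    rw [asc_cons_cons, asc_cons_cons, ih]
    omega

lemma isAscentSeq_singleton {v : ℕ} : IsAscentSeq [v] ↔ v = 0 := by
  simp +contextual [IsAscentSeq]

lemma IsAscentSeq.of_append {s t : List ℕ} (h : IsAscentSeq (s ++ t)) : IsAscentSeq s := by
  refine ⟨fun hs => ?_, fun i hi his => ?_⟩
  · rw [← List.getD_append s t 0 0 hs]
    exact h.1 (by rw [List.length_append]; omega)
  · have := h.2 i hi (by rw [List.length_append]; omega)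
    rwa [List.getD_append s t 0 i his, List.take_append_of_le_length his.le] at this

lemma isAscentSeq_append_singleton {s : List ℕ} (hs : s ≠ []) {v : ℕ} :
    IsAscentSeq (s ++ [v]) ↔ IsAscentSeq s ∧ v ≤ asc s + 1 := by
  have hlen : 0 < s.length := List.length_pos_iff.2 hs
  refine ⟨fun h => ⟨h.of_append, ?_⟩, fun ⟨h, hv⟩ => ⟨fun _ => ?_, fun i hi hi' => ?_⟩⟩
  · simpa using h.2 s.length hlen (by simp)
  · rw [List.getD_append s _ 0 0 hlen]
    exact h.1 hlen
  · rcases (Nat.lt_succ_iff.mp (by simpa using hi')).lt_or_eq with hi' | rfl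
    · rw [List.getD_append s _ 0 i hi', List.take_append_of_le_length hi'.le]
      exact h.2 i hi hi'
    · simpa using hv

lemma le_listMax {s : List ℕ} {a : ℕ} (ha : a ∈ s) : a ≤ listMax s := by
  induction s with
  | nil => simp at ha
  | cons b s ih =>
    rcases List.mem_cons.1 ha with rfl | ha
    · exact le_max_left _ _
    · exact (ih ha).trans (le_max_right _ _)

lemma listMax_le_iff {s : List ℕ} {n : ℕ} : listMax s ≤ n ↔ ∀ a ∈ s, a ≤ n := by
  induction s with
  | nil => simp [listMax]
  | cons b s ih => simp [listMax, ← ih]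

lemma listMax_append_singleton (s : List ℕ) (v : ℕ) : listMax (s ++ [v]) = max (listMax s) v :=
  le_antisymm (listMax_le_iff.2 fun a ha => by
      rcases List.mem_append.1 ha with ha | ha
      · exact (le_listMax ha).trans (le_max_left _ _)
      · simp_all)
    (max_le (listMax_le_iff.2 fun a ha => le_listMax (List.mem_append_left _ ha))
      (le_listMax (by simp)))

lemma IsAscentSeq.listMax_le_asc {s : List ℕ} (h : IsAscentSeq s) : listMax s ≤ asc s := by
  induction s using List.reverseRecOn with
  | nil => simp [listMax, asc]
  | append_singleton s v ih =>
    rcases List.eq_nil_or_concat' s with rfl | ⟨t, b, rfl⟩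
    · simp [isAscentSeq_singleton.1 h, listMax, asc]
    · obtain ⟨hs, hv⟩ := (isAscentSeq_append_singleton (by simp)).1 h
      have hb : b ≤ listMax (t ++ [b]) := le_listMax (by simp)
      rw [listMax_append_singleton, asc_append_singleton]
      have := ih hs
      split_ifs <;> omega

def NonzeroSorted (s : List ℕ) : Prop :=
  s.Pairwise fun a b => a ≠ 0 → b ≠ 0 → a ≤ b

lemma nonzeroSorted_append_singleton {s : List ℕ} {v : ℕ} :
    NonzeroSorted (s ++ [v]) ↔ NonzeroSorted s ∧ (v = 0 ∨ listMax s ≤ v) := by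
  simp only [NonzeroSorted, List.pairwise_append, List.pairwise_singleton, true_and,
    List.mem_singleton, forall_eq, listMax_le_iff]
  by_cases hv : v = 0
  · simp [hv]
  · simp only [hv, false_or]
    exact and_congr_right fun _ =>
      ⟨fun h a ha => by have := h a ha; omega, fun h a ha _ _ => h a ha⟩

lemma not_contains021_iff_nonzeroSorted {s : List ℕ} (h : IsAscentSeq s) :
    ¬ Contains021 s ↔ NonzeroSorted s := by
  simp only [NonzeroSorted, List.pairwise_iff_getElem, Contains021, not_exists, not_and, not_lt]
  constructor
  · intro h021 i j hi hj hij hi0 hj0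
    have h0 : s.getD 0 0 = 0 := h.1 (by omega)
    by_contra! hlt
    have := h021 0 i j (Nat.pos_of_ne_zero (by rintro rfl; simp_all)) hij hj
    simp only [List.getD_eq_getElem _ _ hi, List.getD_eq_getElem _ _ hj, h0] at this
    omega
  · intro hs a b c hab hbc hc hac
    have := hs b c (by omega) hc hbc
    simp only [List.getD_eq_getElem _ _ hc, List.getD_eq_getElem _ _ (hbc.trans hc)] at hac ⊢
    omega

end AscentSequences

lemma sum_Icc_sub_eq_sum_range {M : Type*} [AddCommMonoid M] (f : ℕ → M) (L n : ℕ) :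
    ∑ v ∈ Icc L n, f (n - v) = ∑ i ∈ range (n + 1 - L), f i := by
  rw [← Ico_add_one_right_eq_Icc, sum_Ico_reflect f L le_rfl, Nat.sub_self, range_eq_Ico]

lemma asc_append_zero (s : List ℕ) : asc (s ++ [0]) = asc s := by
  rcases List.eq_nil_or_concat' s with rfl | ⟨t, b, rfl⟩
  · rfl
  · simp only [asc_append_singleton, Nat.not_lt_zero, if_false, add_zero]

def nextValues (s : List ℕ) : Finset ℕ :=
  match s.getLast? with
  | none => {0}
  | some _ => insert 0 (Icc (max 1 (listMax s)) (asc s + 1))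

noncomputable def extensionSeries (s : List ℕ) : ℕ⟦X⟧ :=
  match s.getLast? with
  | none => catalanSeries
  | some b =>
    if b = 0 then catalanSeries ^ 2 * (X * catalanSeries ^ 3 + 1) ^ (asc s + 1 - max 1 (listMax s))
    else catalanSeries ^ 3 * (X * catalanSeries ^ 3 + 1) ^ (asc s - listMax s)

lemma catalanSeries_eq_one_add_X_mul_sq : (catalanSeries : ℕ⟦X⟧) = 1 + X * catalanSeries ^ 2 := by
  conv_lhs => rw [← catalanSeries_sq_mul_X_add_one]
  ring

lemma append_singleton_iff_mem_nextValues {s : List ℕ} (hs : IsAscentSeq s ∧ NonzeroSorted s)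
    (v : ℕ) : (IsAscentSeq (s ++ [v]) ∧ NonzeroSorted (s ++ [v])) ↔ v ∈ nextValues s := by
  rcases List.eq_nil_or_concat' s with rfl | ⟨t, b, rfl⟩
  · simp [nextValues, isAscentSeq_singleton, NonzeroSorted]
  · rw [isAscentSeq_append_singleton (by simp), nonzeroSorted_append_singleton, nextValues,
      List.getLast?_concat]
    simp only [hs, true_and, mem_insert, mem_Icc]
    omega

lemma extensionSeries_append_zero (s : List ℕ) :
    extensionSeries (s ++ [0]) = catalanSeries ^ 2 *
      (X * catalanSeries ^ 3 + 1) ^ (asc s + 1 - max 1 (listMax s)) := by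
  simp only [extensionSeries, List.getLast?_concat, if_true, asc_append_zero,
    listMax_append_singleton, Nat.max_zero]

lemma extensionSeries_append_of_ne_zero {s : List ℕ} {v : ℕ} (hv : v ≠ 0) (hsv : listMax s ≤ v) :
    extensionSeries (s ++ [v]) =
      catalanSeries ^ 3 * (X * catalanSeries ^ 3 + 1) ^ (asc (s ++ [v]) - v) := by
  simp only [extensionSeries, List.getLast?_concat, hv, if_false, listMax_append_singleton,
    max_eq_right hsv]

lemma sum_extensionSeries_append_of_lt {t : List ℕ} {b L : ℕ} (hbL : b < L)
    (hL : listMax (t ++ [b]) ≤ L) :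
    ∑ v ∈ Icc L (asc (t ++ [b]) + 1), extensionSeries (t ++ [b] ++ [v]) =
      ∑ i ∈ range (asc (t ++ [b]) + 1 + 1 - L),
        catalanSeries ^ 3 * (X * catalanSeries ^ 3 + 1) ^ i := by
  rw [← sum_Icc_sub_eq_sum_range]
  refine sum_congr rfl fun v hv => ?_
  rw [mem_Icc] at hv
  rw [extensionSeries_append_of_ne_zero (by omega) (by omega), asc_append_singleton,
    if_pos (by omega)]

theorem extensionSeries_eq_one_add_X_mul_sum {s : List ℕ} (hs : IsAscentSeq s ∧ NonzeroSorted s) :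
    extensionSeries s = 1 + X * ∑ v ∈ nextValues s, extensionSeries (s ++ [v]) := by
  rcases List.eq_nil_or_concat' s with rfl | ⟨t, b, rfl⟩
  · simpa [extensionSeries, nextValues, asc, listMax] using catalanSeries_eq_one_add_X_mul_sq
  have hpa : listMax (t ++ [b]) ≤ asc (t ++ [b]) := hs.1.listMax_le_asc
  simp only [nextValues, List.getLast?_concat]
  rw [sum_insert (by simp), extensionSeries_append_zero]
  by_cases hb : b = 0
  · subst hb
    rw [sum_extensionSeries_append_of_lt (by omega) (le_max_right _ _),
      show asc (t ++ [0]) + 1 + 1 - max 1 (listMax (t ++ [0])) =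
        asc (t ++ [0]) + 1 - max 1 (listMax (t ++ [0])) + 1 by omega]
    simp only [extensionSeries, List.getLast?_concat, if_true]
    exact sq_mul_pow_eq_one_add catalanSeries_eq_one_add_X_mul_sq _
  · have htb : listMax t ≤ b := (nonzeroSorted_append_singleton.1 hs.2).2.resolve_left hb
    have hpb : listMax (t ++ [b]) = b := by rw [listMax_append_singleton, max_eq_right htb]
    rw [hpb, show max 1 b = b by omega,
      ← insert_Icc_add_one_left_eq_Icc (show b ≤ asc (t ++ [b]) + 1 by omega),
      sum_insert (by simp), sum_extensionSeries_append_of_lt (lt_add_one b) (by omega),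
      extensionSeries_append_of_ne_zero hb hpb.le, asc_append_singleton, if_neg (lt_irrefl b),
      add_zero, extensionSeries_append_of_ne_zero hb htb,
      show asc (t ++ [b]) + 1 - b = asc (t ++ [b]) - b + 1 by omega,
      show asc (t ++ [b]) + 1 + 1 - (b + 1) = asc (t ++ [b]) - b + 1 by omega, ← add_assoc]
    exact cube_mul_pow_eq_one_add catalanSeries_eq_one_add_X_mul_sq _

/-- The number of 021-avoiding ascent sequences of length `n` is the `n`-th
Catalan number. -/
theorem stmt13 (n : ℕ) :
    {s : List ℕ | s.length = n ∧ IsAscentSeq s ∧ ¬ Contains021 s}.ncard =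
      catalan n := by
  have hset : {s : List ℕ | s.length = n ∧ IsAscentSeq s ∧ ¬ Contains021 s} =
      extensions (fun s => IsAscentSeq s ∧ NonzeroSorted s) [] n := by
    ext s
    simp only [extensions, List.nil_append, Set.mem_ofPred_eq]
    exact and_congr_right fun _ => and_congr_right not_contains021_iff_nonzeroSorted
  have hcount := encard_extensions_eq_coeff
    (fun s t h => ⟨h.1.of_append, h.2.sublist (List.sublist_append_left s t)⟩)
    nextValues (fun _ => append_singleton_iff_mem_nextValues)
    extensionSeries (fun _ => extensionSeries_eq_one_add_X_mul_sum)
    n [] ⟨⟨by simp, by simp⟩, List.Pairwise.nil⟩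
  rw [hset, Set.ncard_def, hcount, ENat.toNat_natCast]
  simp [extensionSeries, catalanSeries_coeff]
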